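/- arXiv:1612.07999 — 2 statements merged into one kernel-verified Lean document; each statement's English description precedes it below -/
import Mathlib

section
/- Let EE(ρ) = (K/ρ)·exp(−c₂/ρ) with K, c₂ > 0 and let the constraint set be S(δ) = {ρ > 0 : exp(−c₂/ρ) ≥ δ} for 0 < δ < 1. Then the maximizer of EE over S(δ) is ρ* = c₂ if δ ≤ e^{−1}, and ρ* = c₂/ln(1/δ) if δ > e^{−1}. -/
open Real Set

lemma te_le_inv_e (t : ℝ) : t * Real.exp (-t) ≤ Real.exp (-1) := by
  have h : t ≤ Real.exp (t - 1) := by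
    have := Real.add_one_le_exp (t - 1); linarith
  calc t * Real.exp (-t) ≤ Real.exp (t - 1) * Real.exp (-t) :=
        mul_le_mul_of_nonneg_right h (Real.exp_pos _).le
    _ = Real.exp (-1) := by rw [← Real.exp_add]; ring_nf

lemma te_mono {t s : ℝ} (ht : 0 < t) (hts : t ≤ s) (hs : s ≤ 1) :
    t * Real.exp (-t) ≤ s * Real.exp (-s) := by
  have hs0 : 0 < s := lt_of_lt_of_le ht hts
  have h1 : 1 + (t - s) ≤ Real.exp (t - s) := by
    have := Real.add_one_le_exp (t - s); linarith
  have h2 : t ≤ s * Real.exp (t - s) := by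
    nlinarith [mul_nonneg (sub_nonneg.2 hts) (sub_nonneg.2 hs)]
  calc t * Real.exp (-t) ≤ (s * Real.exp (t - s)) * Real.exp (-t) :=
        mul_le_mul_of_nonneg_right h2 (Real.exp_pos _).le
    _ = s * Real.exp (-s) := by rw [mul_assoc, ← Real.exp_add]; ring_nf

theorem optimal_transmit_power (K c₂ δ : ℝ) (hK : 0 < K) (hc₂ : 0 < c₂)
    (hδ0 : 0 < δ) (hδ1 : δ < 1) :
    let EE : ℝ → ℝ := fun ρ => (K / ρ) * Real.exp (-c₂ / ρ)
    let S : Set ℝ := {ρ : ℝ | 0 < ρ ∧ δ ≤ Real.exp (-c₂ / ρ)}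
    let ρstar : ℝ := if δ ≤ Real.exp (-1) then c₂ else c₂ / Real.log (1 / δ)
    ρstar ∈ S ∧ ∀ ρ ∈ S, EE ρ ≤ EE ρstar := by
  intro EE S ρstar
  have hKc : 0 < K / c₂ := div_pos hK hc₂
  have hEE : ∀ ρ : ℝ, 0 < ρ →
      EE ρ = (K / c₂) * ((c₂ / ρ) * Real.exp (-(c₂ / ρ))) := by
    intro ρ hρ
    show (K / ρ) * Real.exp (-c₂ / ρ) = _
    rw [neg_div]
    have : K / ρ = (K / c₂) * (c₂ / ρ) := by field_simp
    rw [this, mul_assoc]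
  by_cases hcase : δ ≤ Real.exp (-1)
  · have hρs : ρstar = c₂ := if_pos hcase
    have hmem : ρstar ∈ S := by
      rw [hρs]
      refine ⟨hc₂, ?_⟩
      rw [neg_div, div_self hc₂.ne']
      exact hcase
    refine ⟨hmem, fun ρ hρ => ?_⟩
    obtain ⟨hρ0, _⟩ := hρ
    rw [hEE ρ hρ0, hρs, hEE c₂ hc₂, div_self hc₂.ne']
    have := te_le_inv_e (c₂ / ρ)
    have h1 : (1 : ℝ) * Real.exp (-1) = Real.exp (-1) := one_mul _
    rw [h1]
    exact mul_le_mul_of_nonneg_left this hKc.le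
  · push_neg at hcase
    have hlogδ : Real.log δ < 0 := Real.log_neg hδ0 hδ1
    have hlogδ' : -1 < Real.log δ := by
      have := Real.log_lt_log (Real.exp_pos (-1)) hcase
      rwa [Real.log_exp] at this
    have hL : Real.log (1 / δ) = -Real.log δ := by
      rw [one_div, Real.log_inv]
    have hL0 : 0 < Real.log (1 / δ) := by rw [hL]; linarith
    have hL1 : Real.log (1 / δ) < 1 := by rw [hL]; linarith
    have hρs : ρstar = c₂ / Real.log (1 / δ) := if_neg (not_le.2 hcase)
    have hρs0 : 0 < ρstar := by rw [hρs]; exact div_pos hc₂ hL0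
    have hkey : c₂ / ρstar = Real.log (1 / δ) := by
      rw [hρs]; field_simp
    have hmem : ρstar ∈ S := by
      refine ⟨hρs0, ?_⟩
      rw [neg_div, hkey, hL, neg_neg, Real.exp_log hδ0]
    refine ⟨hmem, fun ρ hρ => ?_⟩
    obtain ⟨hρ0, hρδ⟩ := hρ
    have ht0 : 0 < c₂ / ρ := div_pos hc₂ hρ0
    have hts : c₂ / ρ ≤ Real.log (1 / δ) := by
      have := Real.log_le_log hδ0 hρδ
      rw [Real.log_exp, neg_div] at this
      rw [hL]; linarith
    rw [hEE ρ hρ0, hEE ρstar hρs0, hkey]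
    exact mul_le_mul_of_nonneg_left (te_mono ht0 hts hL1.le) hKc.le
end

section
/- Under the optimal transmit power ρ* of the constrained energy-efficiency maximization, the achieved energy efficiency is (K/c₂)·e^{−1} if 0 < δ ≤ e^{−1}, and (K/c₂)·δ·ln(1/δ) if e^{−1} < δ < 1, where K = c₁·log₂(1+γ). -/
open Real Set

theorem optimal_energy_efficiency_value (K c₂ δ : ℝ) (hK : 0 < K) (hc₂ : 0 < c₂)
    (hδ0 : 0 < δ) (hδ1 : δ < 1) :
    let EE : ℝ → ℝ := fun ρ => (K / ρ) * Real.exp (-c₂ / ρ)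
    (δ ≤ Real.exp (-1) → EE c₂ = (K / c₂) * Real.exp (-1)) ∧
    (Real.exp (-1) < δ → EE (c₂ / Real.log (1 / δ)) = (K / c₂) * δ * Real.log (1 / δ)) := by
  intro EE
  constructor
  · intro _
    show (K / c₂) * Real.exp (-c₂ / c₂) = (K / c₂) * Real.exp (-1)
    rw [neg_div, div_self hc₂.ne']
  · intro _
    have hL : 0 < Real.log (1 / δ) := by
      rw [one_div, Real.log_inv]
      linarith [Real.log_neg hδ0 hδ1]
    show (K / (c₂ / Real.log (1 / δ))) * Real.exp (-c₂ / (c₂ / Real.log (1 / δ)))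
        = (K / c₂) * δ * Real.log (1 / δ)
    have harg : -c₂ / (c₂ / Real.log (1 / δ)) = -Real.log (1 / δ) := by
      field_simp
    have hexp : Real.exp (-Real.log (1 / δ)) = δ := by
      rw [Real.exp_neg, Real.exp_log (by positivity), one_div, inv_inv]
    rw [harg, hexp, div_div_eq_mul_div]
    ring
end
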